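/- For any d ∈ ℕ with d ≥ 1, u with u^d ≠ 1 and u ≠ 0, 1, and all n ≥ 0: h_{n,λ}(x|u) = dⁿ · ((u⁻¹ - 1)/(1 - u^d)) · ∑_{a=0}^{d-1} u^{d-a} · h_{n,λ/d}((a+x)/d | u^d) (multiplication theorem / distribution relation). -/

import Mathlib

open PowerSeries Finset

noncomputable section

/-- Degenerate falling factorial `(x|λ)_n = x(x-λ)⋯(x-(n-1)λ)`. -/
def degFall {K : Type*} [Ring K] (l x : K) : ℕ → K
  | 0 => 1
  | n + 1 => degFall l x n * (x - (n : K) * l)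

/-- The formal power series `(1+λt)^{x/λ} := ∑_{m≥0} (x|λ)_m t^m/m!`. -/
def binExp {K : Type*} [Field K] (l x : K) : PowerSeries K :=
  PowerSeries.mk fun n => degFall l x n / (n.factorial : K)

/-- Degenerate Frobenius–Euler polynomials `h_{n,λ}(x|u)`, defined by
`(1-u)/((1+λt)^{1/λ} - u) · (1+λt)^{x/λ} = ∑ h_{n,λ}(x|u) tⁿ/n!`. -/
def dFE {K : Type*} [Field K] (l u x : K) (n : ℕ) : K :=
  (n.factorial : K) * PowerSeries.coeff (R := K) n
    ((PowerSeries.C (R := K) (1 - u)) * (binExp l 1 - PowerSeries.C (R := K) u)⁻¹ * binExp l x)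

/-- Degenerate Frobenius–Euler polynomials of order `r`. -/
def dFEr {K : Type*} [Field K] (r : ℕ) (l u x : K) (n : ℕ) : K :=
  (n.factorial : K) * PowerSeries.coeff (R := K) n
    (((PowerSeries.C (R := K) (1 - u)) * (binExp l 1 - PowerSeries.C (R := K) u)⁻¹) ^ r * binExp l x)

/-- The exponential series `e^{xt} = ∑ xⁿ tⁿ/n!`. -/
def expX {K : Type*} [Field K] (x : K) : PowerSeries K :=
  PowerSeries.mk fun n => x ^ n / (n.factorial : K)

/-- Higher-order Frobenius–Euler polynomials `H^{(r)}_n(x|u)`, defined by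
`((1-u)/(e^t-u))^r e^{xt} = ∑ H^{(r)}_n(x|u) tⁿ/n!`. -/
def FEr {K : Type*} [Field K] (r : ℕ) (u x : K) (n : ℕ) : K :=
  (n.factorial : K) * PowerSeries.coeff (R := K) n
    (((PowerSeries.C (R := K) (1 - u)) * (expX (1 : K) - PowerSeries.C (R := K) u)⁻¹) ^ r * expX x)

/-- Signed Stirling numbers of the first kind: `(x)_n = ∑ S₁(n,l) x^l`. -/
def S1 : ℕ → ℕ → ℤ
  | 0, 0 => 1
  | 0, _ + 1 => 0
  | n + 1, 0 => -(n : ℤ) * S1 n 0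
  | n + 1, k + 1 => S1 n k - (n : ℤ) * S1 n (k + 1)

/-- Stirling numbers of the second kind: `xⁿ = ∑ S₂(n,l) (x)_l`. -/
def S2 : ℕ → ℕ → ℤ
  | 0, 0 => 1
  | 0, _ + 1 => 0
  | _ + 1, 0 => 0
  | n + 1, k + 1 => S2 n k + ((k : ℤ) + 1) * S2 n (k + 1)

/-! With `q = (1+λt)^{1/λ}`, the series `(1+λt)^{x/λ}` behaves like `q^x`, and the substitution
`t ↦ d t` turns `(1+λt/d)^{y/(λ/d)}` into `q^{d y}`. Hence `d^n h_{n,λ/d}((a+x)/d | u^d)` has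
generating function `(1-u^d) q^a q^x / (q^d - u^d)`, and summing these against `u^{d-1-a}`
recovers `(1-u) q^x / (q - u)` by the geometric-sum factorization
`q^d - u^d = (q - u) ∑ q^a u^{d-1-a}`. -/

section CommSemiring
variable {K : Type*} [CommSemiring K]

theorem rescale_C (c a : K) : rescale c (C a) = C a := by
  ext n
  rw [coeff_rescale, coeff_C]
  split_ifs with h <;> simp [h]

theorem constantCoeff_rescale (c : K) (f : K⟦X⟧) :
    constantCoeff (rescale c f) = constantCoeff f := by
  rw [← coeff_zero_eq_constantCoeff_apply, coeff_rescale, pow_zero, one_mul,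
    coeff_zero_eq_constantCoeff_apply]

end CommSemiring

section CommRing
variable {K : Type*} [CommRing K]

theorem degFall_add (l x y : K) (n : ℕ) :
    degFall l (x + y) n =
      ∑ ij ∈ antidiagonal n, (n.choose ij.1 : K) * (degFall l x ij.1 * degFall l y ij.2) := by
  induction n with
  | zero => simp [degFall]
  | succ n ih =>
    rw [sum_antidiagonal_choose_succ_mul fun i j => degFall l x i * degFall l y j,
      ← sum_add_distrib, degFall, ih, sum_mul]
    refine sum_congr rfl fun ij hij => ?_
    have hn : n = ij.1 + ij.2 := (mem_antidiagonal.1 hij).symm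
    rw [Nat.choose_symm_of_eq_add hn]
    simp only [degFall, hn, Nat.cast_add]
    ring

theorem degFall_mul_mul (c l x : K) (n : ℕ) :
    degFall (c * l) (c * x) n = c ^ n * degFall l x n := by
  induction n with
  | zero => simp [degFall]
  | succ n ih => rw [degFall, degFall, ih, pow_succ]; ring

end CommRing

section Field
variable {K : Type*} [Field K]

theorem rescale_inv (c : K) (f : K⟦X⟧) : rescale c f⁻¹ = (rescale c f)⁻¹ := by
  by_cases hf : constantCoeff f = 0
  · rw [PowerSeries.inv_eq_zero.2 hf, PowerSeries.inv_eq_zero.2 (by rwa [constantCoeff_rescale]),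
      map_zero]
  · rw [eq_comm, PowerSeries.inv_eq_iff_mul_eq_one (by rwa [constantCoeff_rescale]), ← map_mul,
      PowerSeries.inv_mul_cancel _ hf, map_one]

theorem inv_sub_eq_geom_sum_mul_inv {f g : K⟦X⟧} {d : ℕ}
    (h : constantCoeff (f ^ d - g ^ d) ≠ 0) :
    (f - g)⁻¹ = (∑ i ∈ range d, f ^ i * g ^ (d - 1 - i)) * (f ^ d - g ^ d)⁻¹ := by
  have hgeom := geom_sum₂_mul f g d
  have hfg : constantCoeff (f - g) ≠ 0 := fun h0 => h (by rw [← hgeom, map_mul, h0, mul_zero])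
  rw [PowerSeries.inv_eq_iff_mul_eq_one hfg, mul_right_comm, hgeom, PowerSeries.mul_inv_cancel _ h]

theorem constantCoeff_binExp (l x : K) : constantCoeff (binExp l x) = 1 := by
  simp [← coeff_zero_eq_constantCoeff_apply, binExp, degFall]

theorem rescale_binExp {c : K} (hc : c ≠ 0) (l x : K) :
    rescale c (binExp (l / c) x) = binExp l (c * x) := by
  ext n
  simp only [coeff_rescale, binExp, coeff_mk]
  rw [← mul_div_assoc, ← degFall_mul_mul, mul_div_cancel₀ _ hc]

def dFEGen (l u x : K) : K⟦X⟧ := C (1 - u) * (binExp l 1 - C u)⁻¹ * binExp l x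

theorem factorial_mul_coeff_dFEGen (l u x : K) (n : ℕ) :
    (n.factorial : K) * coeff n (dFEGen l u x) = dFE l u x n :=
  rfl

theorem rescale_dFEGen {c : K} (hc : c ≠ 0) (l v y : K) :
    rescale c (dFEGen (l / c) v y) = C (1 - v) * (binExp l c - C v)⁻¹ * binExp l (c * y) := by
  simp only [dFEGen, map_mul, map_sub, rescale_inv, rescale_C, rescale_binExp hc, mul_one]

variable [CharZero K]

theorem binExp_add (l x y : K) : binExp l (x + y) = binExp l x * binExp l y := by
  ext n
  simp only [coeff_mul, binExp, coeff_mk]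
  rw [degFall_add, sum_div]
  refine sum_congr rfl fun ij hij => ?_
  obtain ⟨i, j⟩ := ij
  obtain rfl : i + j = n := mem_antidiagonal.1 hij
  have hi : (i.factorial : K) ≠ 0 := Nat.cast_ne_zero.2 i.factorial_ne_zero
  have hj : (j.factorial : K) ≠ 0 := Nat.cast_ne_zero.2 j.factorial_ne_zero
  have hij : ((i + j).factorial : K) ≠ 0 := Nat.cast_ne_zero.2 (i + j).factorial_ne_zero
  rw [Nat.cast_add_choose]
  field_simp

theorem binExp_natCast (l : K) (a : ℕ) : binExp l a = binExp l 1 ^ a := by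
  induction a with
  | zero =>
    have hne : binExp l 0 ≠ 0 := fun h => by simpa [h] using constantCoeff_binExp l 0
    have h := binExp_add l 0 0
    rw [add_zero, eq_comm, mul_eq_left₀ hne] at h
    rw [Nat.cast_zero, pow_zero, h]
  | succ a ih => rw [Nat.cast_succ, binExp_add, ih, pow_succ]

theorem dFEGen_eq_sum_rescale {l u : K} (x : K) {d : ℕ} (hud : u ^ d ≠ 1) (hu0 : u ≠ 0) :
    dFEGen l u x = ∑ a ∈ range d, C ((u⁻¹ - 1) / (1 - u ^ d) * u ^ (d - a)) *
      rescale (d : K) (dFEGen (l / d) (u ^ d) (((a : K) + x) / d)) := by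
  have hd : d ≠ 0 := by rintro rfl; exact hud (pow_zero u)
  have hdK : (d : K) ≠ 0 := Nat.cast_ne_zero.2 hd
  have h1ud : 1 - u ^ d ≠ 0 := sub_ne_zero.2 (Ne.symm hud)
  have hcc : constantCoeff (binExp l 1 ^ d - C u ^ d) ≠ 0 := by
    simpa [constantCoeff_binExp] using h1ud
  simp only [rescale_dFEGen hdK, mul_div_cancel₀ _ hdK, binExp_add, binExp_natCast, map_mul,
    map_pow]
  rw [dFEGen, inv_sub_eq_geom_sum_mul_inv hcc, sum_mul, mul_sum, sum_mul]
  refine sum_congr rfl fun a ha => ?_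
  have hscal :
      (1 - u) * u ^ (d - 1 - a) = (u⁻¹ - 1) / (1 - u ^ d) * u ^ (d - a) * (1 - u ^ d) := by
    rw [show d - a = d - 1 - a + 1 by have := mem_range.1 ha; omega, pow_succ]
    field_simp
  have hscalC := congrArg C hscal
  simp only [map_mul, map_pow] at hscalC
  linear_combination (binExp l 1 ^ a * (binExp l 1 ^ d - C u ^ d)⁻¹ * binExp l x) * hscalC

end Field

theorem stmt5_general {K : Type*} [Field K] [CharZero K] (l u x : K) (d : ℕ)
    (hud : u ^ d ≠ 1) (hu0 : u ≠ 0) (n : ℕ) :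
    dFE l u x n =
      (d : K) ^ n * ((u⁻¹ - 1) / (1 - u ^ d)) *
        ∑ a ∈ Finset.range d, u ^ (d - a) * dFE (l / d) (u ^ d) (((a : K) + x) / d) n := by
  rw [← factorial_mul_coeff_dFEGen, dFEGen_eq_sum_rescale x hud hu0, map_sum, mul_sum, mul_sum]
  refine sum_congr rfl fun a _ => ?_
  rw [coeff_C_mul, coeff_rescale, ← factorial_mul_coeff_dFEGen]
  ring

theorem stmt5 {K : Type*} [Field K] [CharZero K] (l u x : K) (d : ℕ) (hd : 1 ≤ d)
    (hud : u ^ d ≠ 1) (hu0 : u ≠ 0) (hu1 : u ≠ 1) (n : ℕ) :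
    dFE l u x n =
      (d : K) ^ n * ((u⁻¹ - 1) / (1 - u ^ d)) *
        ∑ a ∈ Finset.range d, u ^ (d - a) * dFE (l / d) (u ^ d) (((a : K) + x) / d) n :=
  stmt5_general l u x d hud hu0 n
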